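/- arXiv:1501.00912 — 2 statements merged into one kernel-verified Lean document; each statement's English description precedes it below -/
import Mathlib

section
/- Let B be a normal band, let x₁, …, xₙ ∈ B and let y ∈ B satisfy y·x_i·y = y for all i ∈ [1,n]. Then in IG(B): x̄₁⋯x̄ₙ·ȳ = (x₁yx₁)‾ (x₂yx₂)‾ ⋯ (xₙyxₙ)‾·ȳ and ȳ·x̄₁⋯x̄ₙ = ȳ·(x₁yx₁)‾ (x₂yx₂)‾ ⋯ (xₙyxₙ)‾. (Here x_i y x_i equals the image x_iφ_{α_i,β} of x_i under the structure morphism of the strong semilattice decomposition of B, where x_i ∈ B_{α_i} and y ∈ B_β.) -/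
/-! Common definitions: free idempotent generated semigroups over bands,
generalised Green's relations, and abundancy notions. -/

/-- `(e, f)` is a *basic pair* if `ef ∈ {e,f}` or `fe ∈ {e,f}`. -/
def basicPair {B : Type*} [Mul B] (e f : B) : Prop :=
  e * f = e ∨ e * f = f ∨ f * e = e ∨ f * e = f

/-- The defining congruence of the free idempotent generated semigroup `IG B`:
the congruence on the free semigroup on `{ē : e ∈ B}` generated by the relations
`ē f̄ = (ef)‾` for basic pairs `(e, f)`. -/
def igCon (B : Type*) [Semigroup B] : Con (FreeSemigroup B) :=
  conGen fun w₁ w₂ => ∃ e f : B, basicPair e f ∧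
    w₁ = FreeSemigroup.of e * FreeSemigroup.of f ∧ w₂ = FreeSemigroup.of (e * f)

/-- The free idempotent generated semigroup over a band `B`. -/
abbrev IG (B : Type*) [Semigroup B] := (igCon B).Quotient

/-- The canonical generator `ē` of `IG B`. -/
def igOf {B : Type*} [Semigroup B] (e : B) : IG B :=
  ((FreeSemigroup.of e : FreeSemigroup B) : (igCon B).Quotient)

/-- `prodSeq x a b = x a * x (a+1) * ⋯ * x b` (it is `x a` when `b ≤ a`). -/
def prodSeq {M : Type*} [Mul M] (x : ℕ → M) (a b : ℕ) : M :=
  (List.range (b - a)).foldl (fun acc i => acc * x (a + i + 1)) (x a)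

/-- The word `x̄_a x̄_{a+1} ⋯ x̄_b` in the free semigroup on `{ē : e ∈ B}`. -/
def freeWord {B : Type*} (x : ℕ → B) (a b : ℕ) : FreeSemigroup B :=
  prodSeq (fun i => FreeSemigroup.of (x i)) a b

/-- The element `x̄_a x̄_{a+1} ⋯ x̄_b` of `IG B`. -/
def igWord {B : Type*} [Semigroup B] (x : ℕ → B) (a b : ℕ) : IG B :=
  ((freeWord x a b : FreeSemigroup B) : (igCon B).Quotient)

/-- Green's relation `𝓡`: `a 𝓡 b` iff `a = b` or `as = b`, `bt = a` for some `s, t`. -/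
def GreenR {S : Type*} [Semigroup S] (a b : S) : Prop :=
  a = b ∨ ∃ s t : S, a * s = b ∧ b * t = a

/-- Green's relation `𝓛`: `a 𝓛 b` iff `a = b` or `sa = b`, `tb = a` for some `s, t`. -/
def GreenL {S : Type*} [Semigroup S] (a b : S) : Prop :=
  a = b ∨ ∃ s t : S, s * a = b ∧ t * b = a

/-- `a 𝓡* b` iff for all `x, y ∈ S¹`, `xa = ya ↔ xb = yb`. -/
def RStar {S : Type*} [Semigroup S] (a b : S) : Prop :=
  ∀ x y : WithOne S,
    x * (a : WithOne S) = y * (a : WithOne S) ↔ x * (b : WithOne S) = y * (b : WithOne S)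

/-- `a 𝓛* b` iff for all `x, y ∈ S¹`, `ax = ay ↔ bx = by`. -/
def LStar {S : Type*} [Semigroup S] (a b : S) : Prop :=
  ∀ x y : WithOne S,
    (a : WithOne S) * x = (a : WithOne S) * y ↔ (b : WithOne S) * x = (b : WithOne S) * y

/-- `a 𝓡̃ b` iff for every idempotent `e`, `ea = a ↔ eb = b`. -/
def RTilde {S : Type*} [Semigroup S] (a b : S) : Prop :=
  ∀ e : S, IsIdempotentElem e → (e * a = a ↔ e * b = b)

/-- `a 𝓛̃ b` iff for every idempotent `e`, `ae = a ↔ be = b`. -/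
def LTilde {S : Type*} [Semigroup S] (a b : S) : Prop :=
  ∀ e : S, IsIdempotentElem e → (a * e = a ↔ b * e = b)

/-- A semigroup is *abundant* if every `𝓡*`-class and every `𝓛*`-class
contains an idempotent. -/
def Abundant (S : Type*) [Semigroup S] : Prop :=
  ∀ a : S, (∃ e : S, IsIdempotentElem e ∧ RStar a e) ∧
    (∃ e : S, IsIdempotentElem e ∧ LStar a e)

/-- A semigroup is *weakly abundant* if every `𝓡̃`-class and every `𝓛̃`-class
contains an idempotent. -/
def WeaklyAbundant (S : Type*) [Semigroup S] : Prop :=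
  ∀ a : S, (∃ e : S, IsIdempotentElem e ∧ RTilde a e) ∧
    (∃ e : S, IsIdempotentElem e ∧ LTilde a e)

/-- On a band, `x` and `y` are `𝒟`-equivalent iff `xyx = x` and `yxy = y`. -/
def dEquiv {B : Type*} [Mul B] (x y : B) : Prop :=
  x * y * x = x ∧ y * x * y = y

/-- On a band, `x` and `y` are `𝒥`-incomparable iff `xyx ≠ x` and `yxy ≠ y`. -/
def jIncomp {B : Type*} [Mul B] (x y : B) : Prop :=
  x * y * x ≠ x ∧ y * x * y ≠ y

/-- One step of the reduction system induced by the presentation of `IG B`: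
replace a factor `ē f̄`, with `(e,f)` a basic pair, by `(ef)‾`. -/
def RedStep {B : Type*} [Semigroup B] (w w' : FreeSemigroup B) : Prop :=
  ∃ (p q : List B) (e f : B), basicPair e f ∧
    w.head :: w.tail = p ++ e :: f :: q ∧
    w'.head :: w'.tail = p ++ (e * f) :: q

/-- A word is in *normal form* (irreducible) if no reduction step applies. -/
def IsNF {B : Type*} [Semigroup B] (w : FreeSemigroup B) : Prop :=
  ∀ w', ¬ RedStep w w'

/-- `x̄₁ ⋯ x̄ₙ` (letters `x 1, …, x n`) is in *almost normal form* witnessed by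
block boundaries `idx 0 = 0 < idx 1 < ⋯ < idx r = n`: within each block all
letters are `𝒟`-equivalent, and letters in adjacent blocks are incomparable. -/
def AlmostNF {B : Type*} [Mul B] (x : ℕ → B) (n r : ℕ) (idx : ℕ → ℕ) : Prop :=
  1 ≤ r ∧ idx 0 = 0 ∧ idx r = n ∧
  (∀ k < r, idx k < idx (k + 1)) ∧
  (∀ k < r, ∀ p q : ℕ, idx k < p → p ≤ idx (k + 1) → idx k < q → q ≤ idx (k + 1) →
    dEquiv (x p) (x q)) ∧
  (∀ k : ℕ, k + 1 < r → ∀ p q : ℕ, idx k < p → p ≤ idx (k + 1) →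
    idx (k + 1) < q → q ≤ idx (k + 2) → jIncomp (x p) (x q))

/-- Condition (P) for `IG B`. -/
def CondP (B : Type*) [Semigroup B] : Prop :=
  ∀ (n m r : ℕ) (u v : ℕ → B) (iu iv : ℕ → ℕ),
    AlmostNF u n r iu → AlmostNF v m r iv →
    igWord u 1 n = igWord v 1 m →
    ((∀ s : ℕ, 1 ≤ s → s ≤ r →
        (u (iu s) * v (iv s) = u (iu s) ∧ v (iv s) * u (iu s) = v (iv s)) →
        igWord u 1 (iu s) = igWord v 1 (iv s)) ∧
      (∀ t : ℕ, t + 1 ≤ r →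
        (u (iu t + 1) * v (iv t + 1) = v (iv t + 1) ∧
          v (iv t + 1) * u (iu t + 1) = u (iu t + 1)) →
        igWord u (iu t + 1) n = igWord v (iv t + 1) m))

/-- A normal band is *pliant* if for every `𝒟`-class `D` there is `c ∈ D` with
`u e u = c` for every `e ∈ D` and every `u` strictly `𝒥`-above `D`. -/
def Pliant (B : Type*) [Mul B] : Prop :=
  ∀ d : B, ∃ c : B, dEquiv c d ∧
    ∀ e u : B, dEquiv e d → (e * u * e = e ∧ u * e * u ≠ u) → u * e * u = c

section PushDownHelpers

variable {B : Type*} [Semigroup B]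

lemma ig_basic {e f : B} (h : basicPair e f) :
    igOf e * igOf f = igOf (e * f) := by
  rw [igOf, igOf, igOf, ← Con.coe_mul]
  exact (Con.eq _).mpr (ConGen.Rel.of _ _ ⟨e, f, h, rfl, rfl⟩)

lemma prodSeq_self {M : Type*} [Mul M] (x : ℕ → M) (a : ℕ) :
    prodSeq x a a = x a := by
  simp [prodSeq]

lemma prodSeq_succ {M : Type*} [Mul M] (x : ℕ → M) {a b : ℕ} (h : a ≤ b) :
    prodSeq x a (b + 1) = prodSeq x a b * x (b + 1) := by
  unfold prodSeq
  rw [Nat.succ_sub h, List.range_succ, List.foldl_append]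
  simp only [List.foldl_cons, List.foldl_nil]
  have : a + (b - a) + 1 = b + 1 := by omega
  rw [this]

lemma igWord_self (x : ℕ → B) (a : ℕ) : igWord x a a = igOf (x a) := by
  unfold igWord freeWord igOf
  rw [prodSeq_self]

lemma igWord_succ (x : ℕ → B) {a b : ℕ} (h : a ≤ b) :
    igWord x a (b + 1) = igWord x a b * igOf (x (b + 1)) := by
  unfold igWord freeWord igOf
  rw [prodSeq_succ _ h, Con.coe_mul]

variable (hband : ∀ x : B, x * x = x)
variable (hnormal : ∀ p q r : B, p * q * r * p = p * r * q * p)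

include hband in
lemma band_sq (a b : B) : a * b * b = a * b := by
  rw [mul_assoc, hband]

include hband hnormal in
lemma cxc_eq {y c x : B} (hc1 : c * y * c = c) (hc2 : y * c * y = y)
    (hx : y * x * y = y) : c * x * c = c := by
  have A : y * c * x * c * y = y := by
    calc y * c * x * c * y = y * x * c * c * y := by
          simpa only [mul_assoc] using hnormal y c (x * c)
      _ = y * x * c * y := by rw [band_sq hband (y * x) c]
      _ = y * x * c * (y * x * y) := by rw [hx]
      _ = y * x * (c * y * x) * y := by simp only [mul_assoc]
      _ = y * (c * y * x) * x * y := hnormal y x (c * y * x)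
      _ = y * c * y * x * x * y := by simp only [mul_assoc]
      _ = y * c * y * x * y := by rw [band_sq hband (y * c * y) x]
      _ = y * x * y := by rw [hc2]
      _ = y := hx
  calc c * x * c = c * y * c * x * (c * y * c) := by rw [hc1]
    _ = c * (y * c * x * c * y) * c := by simp only [mul_assoc]
    _ = c * y * c := by rw [A]
    _ = c := hc1

include hband hnormal in
lemma xcx_eq {y c x : B} (hc1 : c * y * c = c) (hc2 : y * c * y = y)
    (hx : y * x * y = y) : x * c * x = x * y * x := by
  calc x * c * x = x * (c * y * c) * x := by rw [hc1]
    _ = x * y * c * c * x := by simpa only [mul_assoc] using hnormal x c (y * c)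
    _ = x * y * c * x := by rw [band_sq hband (x * y) c]
    _ = x * c * y * x := hnormal x y c
    _ = x * c * y * y * x := by rw [band_sq hband (x * c) y]
    _ = x * y * c * y * x := by simpa only [mul_assoc] using (hnormal x y (c * y)).symm

    _ = x * (y * c * y) * x := by simp only [mul_assoc]
    _ = x * y * x := by rw [hc2]

include hband in
lemma P1 {y x : B} (hx : y * x * y = y) : x * y * y * (x * y) = x * y := by
  calc x * y * y * (x * y) = x * y * (x * y) := by rw [band_sq hband x y]
    _ = x * (y * x * y) := by simp only [mul_assoc]
    _ = x * y := by rw [hx]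

include hband in
lemma P2 {y x : B} (hx : y * x * y = y) : y * (x * y) * y = y := by
  calc y * (x * y) * y = y * x * (y * y) := by simp only [mul_assoc]
    _ = y * x * y := by rw [hband y]
    _ = y := hx

lemma P3 {y x : B} (hx : y * x * y = y) : x * y * (x * y * x) = x * y * x := by
  calc x * y * (x * y * x) = x * (y * x * y) * x := by simp only [mul_assoc]
    _ = x * y * x := by rw [hx]

include hband in
lemma Q1 {y x : B} (hx : y * x * y = y) : y * x * y * (y * x) = y * x := by
  calc y * x * y * (y * x) = y * (y * x) := by rw [hx]
    _ = y * y * x := (mul_assoc y y x).symm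
    _ = y * x := by rw [hband y]

include hband in
lemma Q2 {y x : B} (hx : y * x * y = y) : y * (y * x) * y = y := by
  calc y * (y * x) * y = y * y * x * y := by simp only [mul_assoc]
    _ = y * x * y := by rw [hband y]
    _ = y := hx

lemma Q3 {y x : B} (hx : y * x * y = y) : x * y * x * (y * x) = x * y * x := by
  calc x * y * x * (y * x) = x * (y * x * y) * x := by simp only [mul_assoc]
    _ = x * y * x := by rw [hx]

include hband hnormal in
lemma SLR {y c x : B} (hc1 : c * y * c = c) (hc2 : y * c * y = y)
    (hx : y * x * y = y) :
    igOf x * igOf c = igOf (x * y * x) * igOf c := by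
  have e1 : c * x * c = c := cxc_eq hband hnormal hc1 hc2 hx
  have h1 : igOf (c * x) * igOf c = igOf c := by
    rw [ig_basic (Or.inr (Or.inl e1)), e1]
  have e2 : x * (c * x) = x * y * x := by
    rw [← mul_assoc]; exact xcx_eq hband hnormal hc1 hc2 hx
  have b2 : basicPair x (c * x) :=
    Or.inr (Or.inr (Or.inr (band_sq hband c x)))
  have h2 : igOf x * igOf (c * x) = igOf (x * y * x) := by
    rw [ig_basic b2, e2]
  calc igOf x * igOf c = igOf x * (igOf (c * x) * igOf c) := by rw [h1]
    _ = igOf x * igOf (c * x) * igOf c := (mul_assoc _ _ _).symm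
    _ = igOf (x * y * x) * igOf c := by rw [h2]

include hband hnormal in
lemma SLL {y c x : B} (hc1 : c * y * c = c) (hc2 : y * c * y = y)
    (hx : y * x * y = y) :
    igOf c * igOf x = igOf c * igOf (x * y * x) := by
  have e1 : c * (x * c) = c := by
    rw [← mul_assoc]; exact cxc_eq hband hnormal hc1 hc2 hx
  have h1 : igOf c * igOf (x * c) = igOf c := by
    rw [ig_basic (Or.inl e1), e1]
  have e2 : x * c * x = x * y * x := xcx_eq hband hnormal hc1 hc2 hx
  have b2 : basicPair (x * c) x := by
    refine Or.inr (Or.inr (Or.inl ?_))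
    rw [← mul_assoc, hband]
  have h2 : igOf (x * c) * igOf x = igOf (x * y * x) := by
    rw [ig_basic b2, e2]
  calc igOf c * igOf x = igOf c * (igOf (x * c) * igOf x) := by
        rw [← mul_assoc, h1]
    _ = igOf c * igOf (x * y * x) := by rw [h2]

lemma ABR {y x : B} (hx : y * x * y = y) :
    igOf (x * y) * igOf (x * y * x) = igOf (x * y * x) := by
  rw [ig_basic (Or.inr (Or.inl (P3 hx))), P3 hx]

lemma ABL {y x : B} (hx : y * x * y = y) :
    igOf (x * y * x) * igOf (y * x) = igOf (x * y * x) := by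
  rw [ig_basic (Or.inl (Q3 hx)), Q3 hx]

end PushDownHelpers

section PushDownWords

variable {B : Type*} [Semigroup B]
variable (hband : ∀ x : B, x * x = x)
variable (hnormal : ∀ p q r : B, p * q * r * p = p * r * q * p)

include hband hnormal in
lemma WLR (y : B) :
    ∀ n : ℕ, 1 ≤ n → ∀ x : ℕ → B, (∀ i : ℕ, 1 ≤ i → i ≤ n → y * x i * y = y) →
    ∀ c : B, c * y * c = c → y * c * y = y →
    igWord x 1 n * igOf c = igWord (fun k => x k * y * x k) 1 n * igOf c := by
  intro n
  induction n with
  | zero => intro h; omega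
  | succ m ih =>
    intro _ x hx c hc1 hc2
    rcases Nat.eq_zero_or_pos m with hm | hm
    · subst hm
      rw [igWord_self, igWord_self]
      exact SLR hband hnormal hc1 hc2 (hx 1 le_rfl le_rfl)
    · have hxm1 : y * x (m + 1) * y = y := hx (m + 1) (by omega) le_rfl
      have ihm := ih hm x (fun i h1 h2 => hx i h1 (by omega))
        (x (m + 1) * y) (P1 hband hxm1) (P2 hband hxm1)
      rw [igWord_succ x hm, igWord_succ _ hm]
      calc igWord x 1 m * igOf (x (m + 1)) * igOf c
          = igWord x 1 m * (igOf (x (m + 1)) * igOf c) := mul_assoc _ _ _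
        _ = igWord x 1 m * (igOf (x (m + 1) * y * x (m + 1)) * igOf c) := by
            rw [SLR hband hnormal hc1 hc2 hxm1]
        _ = igWord x 1 m * (igOf (x (m + 1) * y) *
              igOf (x (m + 1) * y * x (m + 1)) * igOf c) := by
            rw [ABR hxm1]
        _ = (igWord x 1 m * igOf (x (m + 1) * y)) *
              (igOf (x (m + 1) * y * x (m + 1)) * igOf c) := by
            simp only [mul_assoc]
        _ = (igWord (fun k => x k * y * x k) 1 m * igOf (x (m + 1) * y)) *
              (igOf (x (m + 1) * y * x (m + 1)) * igOf c) := by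
            rw [ihm]
        _ = igWord (fun k => x k * y * x k) 1 m *
              (igOf (x (m + 1) * y) * igOf (x (m + 1) * y * x (m + 1))) *
              igOf c := by simp only [mul_assoc]
        _ = igWord (fun k => x k * y * x k) 1 m *
              igOf (x (m + 1) * y * x (m + 1)) * igOf c := by
            rw [ABR hxm1]

include hband hnormal in
lemma WABL (y : B) (x : ℕ → B) :
    ∀ m : ℕ, 1 ≤ m → y * x m * y = y →
    igWord (fun k => x k * y * x k) 1 m * igOf (y * x m) =
      igWord (fun k => x k * y * x k) 1 m := by
  intro m hm hxm
  match m, hm with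
  | 1, _ =>
    rw [igWord_self]
    exact ABL hxm
  | (k + 2), _ =>
    rw [igWord_succ _ (by omega : 1 ≤ k + 1), mul_assoc]
    rw [show k + 1 + 1 = k + 2 from rfl]
    rw [ABL hxm]

include hband hnormal in
lemma WLL (y : B) :
    ∀ n : ℕ, 1 ≤ n → ∀ x : ℕ → B, (∀ i : ℕ, 1 ≤ i → i ≤ n → y * x i * y = y) →
    ∀ c : B, c * y * c = c → y * c * y = y →
    igOf c * igWord x 1 n = igOf c * igWord (fun k => x k * y * x k) 1 n := by
  intro n
  induction n with
  | zero => intro h; omega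
  | succ m ih =>
    intro _ x hx c hc1 hc2
    rcases Nat.eq_zero_or_pos m with hm | hm
    · subst hm
      rw [igWord_self, igWord_self]
      exact SLL hband hnormal hc1 hc2 (hx 1 le_rfl le_rfl)
    · have hxm : y * x m * y = y := hx m hm (by omega)
      have hxm1 : y * x (m + 1) * y = y := hx (m + 1) (by omega) le_rfl
      have ihm := ih hm x (fun i h1 h2 => hx i h1 (by omega)) c hc1 hc2
      have hab := WABL hband hnormal y x m hm hxm
      rw [igWord_succ x hm, igWord_succ _ hm]
      calc igOf c * (igWord x 1 m * igOf (x (m + 1)))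
          = (igOf c * igWord x 1 m) * igOf (x (m + 1)) := (mul_assoc _ _ _).symm
        _ = (igOf c * igWord (fun k => x k * y * x k) 1 m) * igOf (x (m + 1)) := by
            rw [ihm]
        _ = (igOf c * (igWord (fun k => x k * y * x k) 1 m * igOf (y * x m))) *
              igOf (x (m + 1)) := by rw [hab]
        _ = igOf c * (igWord (fun k => x k * y * x k) 1 m *
              (igOf (y * x m) * igOf (x (m + 1)))) := by simp only [mul_assoc]
        _ = igOf c * (igWord (fun k => x k * y * x k) 1 m *
              (igOf (y * x m) * igOf (x (m + 1) * y * x (m + 1)))) := by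
            rw [SLL hband hnormal (Q1 hband hxm) (Q2 hband hxm) hxm1]
        _ = igOf c * ((igWord (fun k => x k * y * x k) 1 m * igOf (y * x m)) *
              igOf (x (m + 1) * y * x (m + 1))) := by simp only [mul_assoc]
        _ = igOf c * (igWord (fun k => x k * y * x k) 1 m *
              igOf (x (m + 1) * y * x (m + 1))) := by rw [hab]

end PushDownWords


/-- Let `B` be a normal band, `x₁, …, xₙ ∈ B` and `y ∈ B` with
`y xᵢ y = y` for all `i ∈ [1,n]`. Then in `IG B`:
`x̄₁ ⋯ x̄ₙ ȳ = (x₁yx₁)‾ ⋯ (xₙyxₙ)‾ ȳ` and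
`ȳ x̄₁ ⋯ x̄ₙ = ȳ (x₁yx₁)‾ ⋯ (xₙyxₙ)‾`. -/
theorem IG_normal_band_push_down
    {B : Type*} [Semigroup B] (hband : ∀ x : B, x * x = x)
    (hnormal : ∀ p q r : B, p * q * r * p = p * r * q * p)
    (n : ℕ) (hn : 1 ≤ n) (x : ℕ → B) (y : B)
    (hy : ∀ i : ℕ, 1 ≤ i → i ≤ n → y * x i * y = y) :
    igWord x 1 n * igOf y = igWord (fun k => x k * y * x k) 1 n * igOf y ∧
    igOf y * igWord x 1 n = igOf y * igWord (fun k => x k * y * x k) 1 n := by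
  have hyy : y * y * y = y := by rw [hband y, hband y]
  exact ⟨WLR hband hnormal y n hn x hy y hyy hyy,
    WLL hband hnormal y n hn x hy y hyy hyy⟩
end

section
/- Let B be a locally large band and let x₁, …, xₙ, y₁, …, y_m ∈ B all be pairwise 𝒟-equivalent, lying in the single 𝒟-class B_α of B (which is a rectangular sub-band of B). Then x̄₁⋯x̄ₙ = ȳ₁⋯ȳ_m in IG(B_α) if and only if x̄₁⋯x̄ₙ = ȳ₁⋯ȳ_m in IG(B). -/
/-!
The inclusion `C ↪ B` induces `IG C → IG B`, since basic pairs of `C` are basic pairs of `B`.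
For the converse, let `IG C` be extended by an identity `1` and a zero `0`, and send `e ∈ B` to
`ē` if `e ∈ C`, to `1` if `e` lies strictly `𝒥`-above `C`, and to `0` otherwise. Local largeness
makes every element strictly above `C` act as an identity on `C`, so this assignment respects
`ē f̄ = (ef)‾` for every basic pair and extends to `IG B`. On `IG C` the composite is the
(injective) inclusion into `(IG C)¹⁰`, hence `IG C → IG B` is injective.
-/

theorem map_prodSeq {M N : Type*} [Mul M] [Mul N] (g : M →ₙ* N) (x : ℕ → M) (s t : ℕ) :
    g (prodSeq x s t) = prodSeq (fun i => g (x i)) s t := by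
  unfold prodSeq
  induction t - s with
  | zero => rfl
  | succ k ih => simp only [List.range_succ, List.foldl_append, List.foldl_cons,
      List.foldl_nil, map_mul, ih]

theorem basicPair.map {M N : Type*} [Mul M] [Mul N] (g : M →ₙ* N) {e f : M}
    (h : basicPair e f) : basicPair (g e) (g f) := by
  unfold basicPair at h ⊢
  simp only [← map_mul]
  rcases h with h | h | h | h <;> simp [h]

namespace IG

variable {M N : Type*} [Semigroup M] [Semigroup N]

theorem igOf_mul_igOf {e f : M} (h : basicPair e f) : igOf e * igOf f = igOf (e * f) :=
  (Con.eq _).mpr (ConGen.Rel.of _ _ ⟨e, f, h, rfl, rfl⟩)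

theorem igWord_eq_prodSeq (x : ℕ → M) (s t : ℕ) :
    igWord x s t = prodSeq (fun i => igOf (x i)) s t :=
  map_prodSeq (igCon M).mkMulHom _ s t

theorem igCon_le_ker_lift {φ : M → N} (hφ : ∀ e f, basicPair e f → φ e * φ f = φ (e * f)) :
    igCon M ≤ Con.ker (FreeSemigroup.lift φ) := by
  refine Con.conGen_le.mpr ?_
  rintro _ _ ⟨e, f, hef, rfl, rfl⟩
  simp only [Con.ker_rel, map_mul, FreeSemigroup.lift_of, hφ e f hef]

def lift (φ : M → N) (hφ : ∀ e f, basicPair e f → φ e * φ f = φ (e * f)) : IG M →ₙ* N where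
  toFun q := Con.liftOn q (FreeSemigroup.lift φ) fun _ _ hw => igCon_le_ker_lift hφ hw
  map_mul' p q := Con.induction_on₂ p q fun _ _ => map_mul _ _ _

variable {φ : M → N} {hφ : ∀ e f, basicPair e f → φ e * φ f = φ (e * f)}

@[simp]
theorem lift_igOf (e : M) : lift φ hφ (igOf e) = φ e :=
  FreeSemigroup.lift_of φ e

theorem lift_igWord (x : ℕ → M) (s t : ℕ) :
    lift φ hφ (igWord x s t) = prodSeq (fun i => φ (x i)) s t := by
  simp only [igWord_eq_prodSeq, map_prodSeq, lift_igOf]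

theorem hom_ext {g₁ g₂ : IG M →ₙ* N} (h : ∀ e, g₁ (igOf e) = g₂ (igOf e)) : g₁ = g₂ := by
  have hfree : g₁.comp (igCon M).mkMulHom = g₂.comp (igCon M).mkMulHom :=
    FreeSemigroup.hom_ext (funext h)
  ext q
  induction q using Con.induction_on with
  | H w => exact DFunLike.congr_fun hfree w

def map (g : M →ₙ* N) : IG M →ₙ* IG N :=
  lift (fun e => igOf (g e)) fun e f h => by rw [igOf_mul_igOf (h.map g), map_mul]

@[simp]
theorem map_igOf (g : M →ₙ* N) (e : M) : map g (igOf e) = igOf (g e) :=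
  lift_igOf e

theorem map_igWord (g : M →ₙ* N) (x : ℕ → M) (s t : ℕ) :
    map g (igWord x s t) = igWord (fun i => g (x i)) s t := by
  rw [map, lift_igWord, igWord_eq_prodSeq]

end IG

section Band

variable {B : Type*} [Semigroup B]

theorem mul_mul_eq_self_of_mul_mul_mul_eq_self {a e f : B} (hband : ∀ x : B, x * x = x)
    (h : a * (e * f) * a = a) : a * e * a = a ∧ a * f * a = a := by
  have h' : a * e * (f * a) = a := by simpa only [mul_assoc] using h
  constructor
  · calc a * e * a = a * e * (a * e * (f * a)) := by rw [h']
      _ = (a * e) * (a * e) * (f * a) := by simp only [mul_assoc]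
      _ = a := by rw [hband, h']
  · calc a * f * a = a * e * (f * a) * f * a := by rw [h']
      _ = (a * e) * ((f * a) * (f * a)) := by simp only [mul_assoc]
      _ = a := by rw [hband, h']

theorem dEquiv_self {a : B} (hband : ∀ x : B, x * x = x) : dEquiv a a := by
  simp only [dEquiv, hband, and_self]

theorem mul_eq_left_of_dEquiv_of_strictlyAbove (hband : ∀ x : B, x * x = x)
    (hLL : ∀ p q : B, p * q * p = p → q * p * q ≠ q → p * q = p ∧ q * p = p)
    {a e u : B} (he : dEquiv e a) (hau : a * u * a = a) (hu : ¬ dEquiv u a) :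
    e * u = e ∧ u * e = e := by
  obtain ⟨hau', hua⟩ := hLL a u hau fun h => hu ⟨h, hau⟩
  have heu : e * u * e = e := by
    have k : e * u * (a * e) = e := by
      calc e * u * (a * e) = e * (u * a) * e := by simp only [mul_assoc]
        _ = e := by rw [hua, he.1]
    calc e * u * e = e * u * (e * u * (a * e)) := by rw [k]
      _ = (e * u) * (e * u) * (a * e) := by simp only [mul_assoc]
      _ = e := by rw [hband, k]
  have hue : u * e * u ≠ u := by
    intro h
    have hu_a : u = a := by
      have k₁ : u * e * a = a := by
        calc u * e * a = (u * e * u) * a := by rw [mul_assoc _ u, hua]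
          _ = a := by rw [h, hua]
      have k₂ : a * e * u = a := by
        calc a * e * u = a * u * e * u := by rw [hau']
          _ = a * (u * e * u) := by simp only [mul_assoc]
          _ = a := by rw [h, hau']
      calc u = u * (e * a * e) * u := by rw [he.1, h]
        _ = (u * e * a) * (e * u) := by simp only [mul_assoc]
        _ = a := by rw [k₁, ← mul_assoc, k₂]
    exact hu (hu_a ▸ dEquiv_self hband)
  exact hLL e u heu hue

theorem strictlyAbove_mul_of_basicPair (hband : ∀ x : B, x * x = x)
    (hLL : ∀ p q : B, p * q * p = p → q * p * q ≠ q → p * q = p ∧ q * p = p)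
    {a e f : B} (hae : a * e * a = a) (he : ¬ dEquiv e a) (haf : a * f * a = a)
    (hf : ¬ dEquiv f a) (hef : basicPair e f) :
    a * (e * f) * a = a ∧ ¬ dEquiv (e * f) a := by
  obtain ⟨hae', hea⟩ := hLL a e hae fun h => he ⟨h, hae⟩
  obtain ⟨haf', hfa⟩ := hLL a f haf fun h => hf ⟨h, haf⟩
  refine ⟨by rw [← mul_assoc, hae', haf], fun hd => ?_⟩
  have hef_a : e * f = a :=
    calc e * f = e * (f * a) * (e * f) := by rw [← mul_assoc e f, hd.1]
      _ = a := by rw [hfa, hea, ← mul_assoc, hae', haf']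
  have he_a : e ≠ a := fun h => he (h ▸ dEquiv_self hband)
  have hf_a : f ≠ a := fun h => hf (h ▸ dEquiv_self hband)
  rcases hef with h | h | h | h
  · exact he_a (h.symm.trans hef_a)
  · exact hf_a (h.symm.trans hef_a)
  · refine he_a ?_
    calc e = e * (f * e) := by rw [h, hband]
      _ = a := by rw [← mul_assoc, hef_a, hae']
  · refine hf_a ?_
    calc f = f * e * f := by rw [h, hband]
      _ = a := by rw [mul_assoc, hef_a, hfa]

end Band

theorem basicPair_subtype_iff {B : Type*} [Semigroup B] {C : Subsemigroup B} {x y : C} :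
    basicPair x y ↔ basicPair (x : B) y := by
  simp only [basicPair, Subtype.ext_iff, MulMemClass.coe_mul]

section DClass

variable {B : Type*} [Semigroup B] {C : Subsemigroup B} {a : B}

open Classical in
noncomputable def dClassCollapse (C : Subsemigroup B) (a e : B) : WithZero (WithOne (IG C)) :=
  if h : e ∈ C then WithZero.coe (WithOne.coe (igOf (⟨e, h⟩ : C)))
  else if a * e * a = a then 1 else 0

theorem dClassCollapse_of_mem {e : B} (h : e ∈ C) :
    dClassCollapse C a e = WithZero.coe (WithOne.coe (igOf (⟨e, h⟩ : C))) :=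
  dif_pos h

theorem dClassCollapse_of_strictlyAbove (hC : ∀ z : B, z ∈ C ↔ dEquiv z a) {e : B}
    (hae : a * e * a = a) (he : ¬ dEquiv e a) : dClassCollapse C a e = 1 := by
  rw [dClassCollapse, dif_neg (mt (hC e).mp he), if_pos hae]

theorem dClassCollapse_of_not_above (hC : ∀ z : B, z ∈ C ↔ dEquiv z a) {e : B}
    (hae : a * e * a ≠ a) : dClassCollapse C a e = 0 := by
  rw [dClassCollapse, dif_neg fun h => hae ((hC e).mp h).2, if_neg hae]

theorem dClassCollapse_mul (hband : ∀ x : B, x * x = x)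
    (hLL : ∀ p q : B, p * q * p = p → q * p * q ≠ q → p * q = p ∧ q * p = p)
    (hC : ∀ z : B, z ∈ C ↔ dEquiv z a) {e f : B} (hef : basicPair e f) :
    dClassCollapse C a e * dClassCollapse C a f = dClassCollapse C a (e * f) := by
  by_cases hae : a * e * a = a; swap
  · have h : a * (e * f) * a ≠ a := fun h =>
      hae (mul_mul_eq_self_of_mul_mul_mul_eq_self hband h).1
    rw [dClassCollapse_of_not_above hC hae, zero_mul, dClassCollapse_of_not_above hC h]
  by_cases haf : a * f * a = a; swap
  · have h : a * (e * f) * a ≠ a := fun h =>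
      haf (mul_mul_eq_self_of_mul_mul_mul_eq_self hband h).2
    rw [dClassCollapse_of_not_above hC haf, mul_zero, dClassCollapse_of_not_above hC h]
  by_cases he : dEquiv e a <;> by_cases hf : dEquiv f a
  · have he' := (hC e).mpr he
    have hf' := (hC f).mpr hf
    have hefC : basicPair (⟨e, he'⟩ : C) ⟨f, hf'⟩ := basicPair_subtype_iff.mpr hef
    rw [dClassCollapse_of_mem he', dClassCollapse_of_mem hf',
      dClassCollapse_of_mem (mul_mem he' hf'), ← WithZero.coe_mul, ← WithOne.coe_mul,
      IG.igOf_mul_igOf hefC]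
    rfl
  · rw [dClassCollapse_of_strictlyAbove hC haf hf, mul_one,
      (mul_eq_left_of_dEquiv_of_strictlyAbove hband hLL he haf hf).1]
  · rw [dClassCollapse_of_strictlyAbove hC hae he, one_mul,
      (mul_eq_left_of_dEquiv_of_strictlyAbove hband hLL hf hae he).2]
  · obtain ⟨habove, hnot⟩ := strictlyAbove_mul_of_basicPair hband hLL hae he haf hf hef
    rw [dClassCollapse_of_strictlyAbove hC hae he, dClassCollapse_of_strictlyAbove hC haf hf,
      dClassCollapse_of_strictlyAbove hC habove hnot, one_mul]

theorem IG.map_subtype_injective (hband : ∀ x : B, x * x = x)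
    (hLL : ∀ p q : B, p * q * p = p → q * p * q ≠ q → p * q = p ∧ q * p = p)
    (hC : ∀ z : B, z ∈ C ↔ dEquiv z a) :
    Function.Injective (IG.map (MulMemClass.subtype C)) := by
  let θ : IG C →ₙ* WithZero (WithOne (IG C)) :=
    WithZero.coeMonoidHom.toMulHom.comp WithOne.coeMulHom
  have hθ : Function.Injective θ := WithZero.coe_injective.comp WithOne.coe_injective
  have hcomp : (IG.lift (dClassCollapse C a) fun _ _ => dClassCollapse_mul hband hLL hC).comp
      (IG.map (MulMemClass.subtype C)) = θ :=
    IG.hom_ext fun e => by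
      simp only [MulHom.comp_apply, IG.map_igOf, IG.lift_igOf]
      exact dClassCollapse_of_mem e.2
  rw [← hcomp, MulHom.coe_comp] at hθ
  exact hθ.of_comp

end DClass

theorem IG_locally_large_band_Dclass_words_general
    {B : Type*} [Semigroup B] (hband : ∀ x : B, x * x = x)
    (hLL : ∀ p q : B, p * q * p = p → q * p * q ≠ q → p * q = p ∧ q * p = p)
    (C : Subsemigroup B) (a : B)
    (hC : ∀ z : B, z ∈ C ↔ dEquiv z a)
    (n m : ℕ) (x y : ℕ → C) :
    igWord x 1 n = igWord y 1 m ↔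
      igWord (fun i => (x i : B)) 1 n = igWord (fun i => (y i : B)) 1 m := by
  rw [← (IG.map_subtype_injective hband hLL hC).eq_iff, IG.map_igWord, IG.map_igWord]
  rfl

/-- Let `B` be a locally large band and let `C` be a
`𝒟`-class of `B` (a rectangular sub-band). For words with all letters in `C`,
equality in `IG C` is equivalent to equality in `IG B`. -/
theorem IG_locally_large_band_Dclass_words
    {B : Type*} [Semigroup B] (hband : ∀ x : B, x * x = x)
    (hLL : ∀ p q : B, p * q * p = p → q * p * q ≠ q → p * q = p ∧ q * p = p)
    (C : Subsemigroup B) (a : B) (ha : a ∈ C)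
    (hC : ∀ z : B, z ∈ C ↔ dEquiv z a)
    (n m : ℕ) (hn : 1 ≤ n) (hm : 1 ≤ m) (x y : ℕ → C) :
    igWord x 1 n = igWord y 1 m ↔
      igWord (fun i => (x i : B)) 1 n = igWord (fun i => (y i : B)) 1 m :=
  IG_locally_large_band_Dclass_words_general hband hLL C a hC n m x y
end
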